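/- arXiv:2603.15215 — 12 statements merged into one kernel-verified Lean document; each statement's English description precedes it below -/
import Mathlib

section
/- Let n ≥ 1, m ≥ 1 and let σ_1, …, σ_n be a ranking profile of permutations of {1, …, m}. The function D(x) = 1/(1 + (1/n)·∑_{v=1}^n ∑_{c=1}^m (σ_v(c) − x_c)²) on ℝ^m attains its maximum at a unique point, namely the mean vector x̄ with coordinates x̄_c = (1/n)·∑_{v=1}^n σ_v(c). Consequently, a candidate c* has minimal coordinate in the (unique) deepest point x̄ if and only if c* minimizes the Borda score ∑_{v=1}^n σ_v(c) over all candidates c; that is, the continuous L²-deepest voting winners are exactly the Borda winners. -/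
open Finset

/-- The rank (in `{1, …, m}`) that the ranking `σ` assigns to candidate `c`. -/
def rk {m : ℕ} (σ : Equiv.Perm (Fin m)) (c : Fin m) : ℕ := (σ c : ℕ) + 1

/-- The mean vector of the profile: `x̄ c = (1/n) ∑ᵥ σᵥ(c)`. -/
noncomputable def xbar {n m : ℕ} (σs : Fin n → Equiv.Perm (Fin m)) : Fin m → ℝ :=
  fun c => (1 / (n : ℝ)) * ∑ v, (rk (σs v) c : ℝ)

/-- The continuous L² depth of a point `x ∈ ℝ^m` w.r.t. the ranking profile. -/
noncomputable def depthL2 {n m : ℕ} (σs : Fin n → Equiv.Perm (Fin m)) (x : Fin m → ℝ) : ℝ :=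
  1 / (1 + (1 / (n : ℝ)) * ∑ v, ∑ c, ((rk (σs v) c : ℝ) - x c) ^ 2)

/- The sum of squared distances from `x` to the profile splits, coordinate by coordinate, into
its value at the mean vector `x̄` plus `n ‖x - x̄‖²` (the bias–variance decomposition). Hence
`x̄` is the unique minimiser of that sum, i.e. the unique deepest point, and since `x̄` is the
Borda score vector scaled by `1/n > 0`, its minimal coordinates are the Borda winners. -/

lemma sum_sq_sub_eq_sum_sq_sub_mean_add {ι : Type*} (s : Finset ι) (a : ι → ℝ) {μ : ℝ}
    (hμ : #s * μ = ∑ i ∈ s, a i) (x : ℝ) :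
    ∑ i ∈ s, (a i - x) ^ 2 = ∑ i ∈ s, (a i - μ) ^ 2 + #s * (x - μ) ^ 2 := by
  have expand : ∀ i, (a i - x) ^ 2 = (a i - μ) ^ 2 + 2 * (μ - x) * a i + (x ^ 2 - μ ^ 2) :=
    fun i => by ring
  simp_rw [expand]
  rw [sum_add_distrib, sum_add_distrib, ← mul_sum, sum_const, nsmul_eq_mul, ← hμ]
  ring

lemma sum_sq_rk_sub_eq {n m : ℕ} (hn : 0 < n) (σs : Fin n → Equiv.Perm (Fin m))
    (x : Fin m → ℝ) :
    ∑ v, ∑ c, ((rk (σs v) c : ℝ) - x c) ^ 2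
      = ∑ v, ∑ c, ((rk (σs v) c : ℝ) - xbar σs c) ^ 2 + n * ∑ c, (x c - xbar σs c) ^ 2 := by
  have hmean : ∀ c, #(univ : Finset (Fin n)) * xbar σs c = ∑ v, (rk (σs v) c : ℝ) := by
    intro c
    rw [card_fin, xbar, ← mul_assoc, mul_one_div_cancel (by positivity), one_mul]
  calc ∑ v, ∑ c, ((rk (σs v) c : ℝ) - x c) ^ 2
      = ∑ c, ∑ v, ((rk (σs v) c : ℝ) - x c) ^ 2 := sum_comm
    _ = ∑ c, (∑ v, ((rk (σs v) c : ℝ) - xbar σs c) ^ 2 + n * (x c - xbar σs c) ^ 2) :=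
        sum_congr rfl fun c _ => by
          rw [sum_sq_sub_eq_sum_sq_sub_mean_add _ _ (hmean c), card_fin]
    _ = _ := by rw [sum_add_distrib, sum_comm, mul_sum]

lemma depthL2_lt_depthL2_xbar {n m : ℕ} (hn : 0 < n) (σs : Fin n → Equiv.Perm (Fin m))
    {x : Fin m → ℝ} (hx : x ≠ xbar σs) :
    depthL2 σs x < depthL2 σs (xbar σs) := by
  obtain ⟨c₀, hc₀⟩ := Function.ne_iff.mp hx
  have hdist : 0 < ∑ c, (x c - xbar σs c) ^ 2 :=
    sum_pos' (fun c _ => sq_nonneg _) ⟨c₀, mem_univ _, sq_pos_of_ne_zero (sub_ne_zero.mpr hc₀)⟩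
  have hspread : 0 ≤ 1 / (n : ℝ) * ∑ v, ∑ c, ((rk (σs v) c : ℝ) - xbar σs c) ^ 2 := by
    positivity
  have hn' : (n : ℝ) ≠ 0 := by positivity
  unfold depthL2
  rw [sum_sq_rk_sub_eq hn σs x, mul_add, ← mul_assoc, one_div_mul_cancel hn', one_mul]
  exact one_div_lt_one_div_of_lt (by linarith) (by linarith)

lemma xbar_le_xbar_iff {n m : ℕ} (hn : 0 < n) (σs : Fin n → Equiv.Perm (Fin m))
    (c c' : Fin m) :
    xbar σs c ≤ xbar σs c' ↔ ∑ v, rk (σs v) c ≤ ∑ v, rk (σs v) c' := by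
  unfold xbar
  rw [mul_le_mul_iff_right₀ (by positivity)]
  exact_mod_cast Iff.rfl

theorem stmt_0_general (n m : ℕ) (hn : 1 ≤ n)
    (σs : Fin n → Equiv.Perm (Fin m)) :
    (∀ x : Fin m → ℝ, x ≠ xbar σs → depthL2 σs x < depthL2 σs (xbar σs)) ∧
    (∀ cstar : Fin m,
      (∀ c, xbar σs cstar ≤ xbar σs c) ↔
      (∀ c, ∑ v, rk (σs v) cstar ≤ ∑ v, rk (σs v) c)) :=
  ⟨fun _ hx => depthL2_lt_depthL2_xbar hn σs hx,
    fun cstar => forall_congr' fun c => xbar_le_xbar_iff hn σs cstar c⟩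

/-- The L² depth attains its maximum uniquely at the mean vector `x̄`, and a candidate has
minimal coordinate in `x̄` iff it minimizes the Borda score: continuous L²-deepest voting
winners are exactly the Borda winners. -/
theorem stmt_0 (n m : ℕ) (hn : 1 ≤ n) (hm : 1 ≤ m)
    (σs : Fin n → Equiv.Perm (Fin m)) :
    (∀ x : Fin m → ℝ, x ≠ xbar σs → depthL2 σs x < depthL2 σs (xbar σs)) ∧
    (∀ cstar : Fin m,
      (∀ c, xbar σs cstar ≤ xbar σs c) ↔
      (∀ c, ∑ v, rk (σs v) cstar ≤ ∑ v, rk (σs v) c)) :=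
  stmt_0_general n m hn σs
end

section
/- Let n ≥ 1, m ≥ 1 and let σ_1, …, σ_n be a ranking profile of permutations of {1, …, m}. Let E* ⊆ ℝ^m be the set of maximizers of the L¹ depth D(x) = 1/(1 + (1/n)·∑_{v=1}^n ∑_{c=1}^m |σ_v(c) − x_c|), and let c_D* be the set of candidates c such that some x ∈ E* satisfies x_c = min_{c'} x_{c'}. For each candidate c define its Bucklin value b(c) as the least integer r such that 2·#{v : σ_v(c) ≤ r} > n. Then every Bucklin winner, i.e. every candidate c* with b(c*) = min_c b(c), belongs to c_D*. -/
open Finset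

/-- The continuous L¹ depth of a point `x ∈ ℝ^m` w.r.t. the ranking profile. -/
noncomputable def depthL1 {n m : ℕ} (σs : Fin n → Equiv.Perm (Fin m)) (x : Fin m → ℝ) : ℝ :=
  1 / (1 + (1 / (n : ℝ)) * ∑ v, ∑ c, |(rk (σs v) c : ℝ) - x c|)

/-- The Bucklin value of candidate `c`: the least `r` such that a strict majority of voters
rank `c` within the first `r` positions. -/
noncomputable def bucklin {n m : ℕ} (σs : Fin n → Equiv.Perm (Fin m)) (c : Fin m) : ℕ :=
  sInf {r : ℕ | n < 2 * (univ.filter fun v => rk (σs v) c ≤ r).card}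

lemma bucklin_mem {n m : ℕ} (hn : 1 ≤ n) (σs : Fin n → Equiv.Perm (Fin m)) (c : Fin m) :
    n < 2 * (univ.filter fun v => rk (σs v) c ≤ bucklin σs c).card := by
  have hne : {r : ℕ | n < 2 * (univ.filter fun v => rk (σs v) c ≤ r).card}.Nonempty := by
    refine ⟨m, ?_⟩
    have : (univ.filter fun v => rk (σs v) c ≤ m) = (univ : Finset (Fin n)) := by
      apply Finset.filter_true_of_mem; intro v _
      have := (σs v c).isLt; unfold rk; omega
    simp only [Set.mem_setOf_eq, this, card_univ, Fintype.card_fin]; omega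
  exact Nat.sInf_mem hne

lemma bucklin_lt {n m : ℕ} (σs : Fin n → Equiv.Perm (Fin m)) (c : Fin m) :
    2 * (univ.filter fun v => rk (σs v) c < bucklin σs c).card ≤ n := by
  rcases Nat.eq_zero_or_pos (bucklin σs c) with h0 | hpos
  · rw [h0]
    have : (univ.filter fun v => rk (σs v) c < 0) = ∅ := by simp
    simp [this]
  · have hlt : bucklin σs c - 1 < bucklin σs c := by omega
    have := Nat.notMem_of_lt_sInf (show bucklin σs c - 1 < sInf _ from hlt)
    simp only [Set.mem_setOf_eq, not_lt] at this
    have hfe : (univ.filter fun v => rk (σs v) c < bucklin σs c)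
        = (univ.filter fun v => rk (σs v) c ≤ bucklin σs c - 1) := by
      apply Finset.filter_congr; intro v _; constructor <;> intro h <;> omega
    rw [hfe]; exact this


lemma key {n : ℕ} (a : Fin n → ℕ) (b : ℕ)
    (h1 : n < 2 * (univ.filter fun v => a v ≤ b).card)
    (h2 : 2 * (univ.filter fun v => a v < b).card ≤ n)
    (t : ℝ) : ∑ v, |(a v : ℝ) - b| ≤ ∑ v, |(a v : ℝ) - t| := by
  have hcard1 : (univ.filter fun v => a v ≤ b).card
      + (univ.filter fun v => ¬ a v ≤ b).card = n := by
    rw [Finset.card_filter_add_card_filter_not]; simp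
  have hcard2 : (univ.filter fun v => b ≤ a v).card
      + (univ.filter fun v => ¬ b ≤ a v).card = n := by
    rw [Finset.card_filter_add_card_filter_not]; simp
  rcases le_total t (b : ℝ) with ht | ht
  · -- t ≤ b
    set g : Fin n → ℝ := fun v => if b ≤ a v then (b : ℝ) - t else t - (b : ℝ) with hg
    have hpt : ∀ v, |(a v : ℝ) - b| + g v ≤ |(a v : ℝ) - t| := by
      intro v
      by_cases hv : b ≤ a v
      · have hav : (b : ℝ) ≤ a v := by exact_mod_cast hv
        simp only [hg, hv, if_pos]
        rw [abs_of_nonneg (by linarith), abs_of_nonneg (by linarith)]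
        linarith
      · simp only [hg, hv, if_neg, not_false_iff]
        have := abs_sub_abs_le_abs_sub ((a v : ℝ) - b) ((a v : ℝ) - t)
        have habs : |((a v : ℝ) - b) - ((a v : ℝ) - t)| = (b:ℝ) - t := by
          rw [show ((a v : ℝ) - b) - ((a v : ℝ) - t) = t - b by ring,
            abs_of_nonpos (by linarith)]; ring
        linarith [abs_sub_abs_le_abs_sub ((a v : ℝ) - b) ((a v : ℝ) - t), habs]
    have hsum := Finset.sum_le_sum (fun v (_ : v ∈ univ) => hpt v)
    rw [Finset.sum_add_distrib] at hsum
    have hgsum : 0 ≤ ∑ v, g v := by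
      rw [← Finset.sum_filter_add_sum_filter_not univ (fun v => b ≤ a v)]
      have e1 : ∑ v ∈ univ.filter (fun v => b ≤ a v), g v
          = (univ.filter fun v => b ≤ a v).card * ((b:ℝ) - t) := by
        rw [Finset.sum_congr rfl (fun v hv => ?_), Finset.sum_const, nsmul_eq_mul]
        simp only [mem_filter] at hv; simp [hg, hv.2]
      have e2 : ∑ v ∈ univ.filter (fun v => ¬ b ≤ a v), g v
          = (univ.filter fun v => ¬ b ≤ a v).card * (t - (b:ℝ)) := by
        rw [Finset.sum_congr rfl (fun v hv => ?_), Finset.sum_const, nsmul_eq_mul]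
        simp only [mem_filter] at hv; simp [hg, hv.2]
      rw [e1, e2]
      have hle : (univ.filter fun v => ¬ b ≤ a v).card ≤ (univ.filter fun v => b ≤ a v).card := by
        have hfe : (univ.filter fun v => ¬ b ≤ a v) = (univ.filter fun v => a v < b) := by
          apply Finset.filter_congr; intro v _; simp [not_le]
        rw [hfe]; rw [hfe] at hcard2; omega
      have : ((univ.filter fun v => ¬ b ≤ a v).card : ℝ)
          ≤ ((univ.filter fun v => b ≤ a v).card : ℝ) := by exact_mod_cast hle
      nlinarith
    linarith
  · -- b ≤ t
    set g : Fin n → ℝ := fun v => if a v ≤ b then t - (b : ℝ) else (b : ℝ) - t with hg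
    have hpt : ∀ v, |(a v : ℝ) - b| + g v ≤ |(a v : ℝ) - t| := by
      intro v
      by_cases hv : a v ≤ b
      · have hav : (a v : ℝ) ≤ b := by exact_mod_cast hv
        simp only [hg, hv, if_pos]
        rw [abs_of_nonpos (by linarith), abs_of_nonpos (by linarith)]
        linarith
      · simp only [hg, hv, if_neg, not_false_iff]
        have habs : |((a v : ℝ) - b) - ((a v : ℝ) - t)| = t - (b:ℝ) := by
          rw [show ((a v : ℝ) - b) - ((a v : ℝ) - t) = t - b by ring,
            abs_of_nonneg (by linarith)]
        linarith [abs_sub_abs_le_abs_sub ((a v : ℝ) - b) ((a v : ℝ) - t), habs]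
    have hsum := Finset.sum_le_sum (fun v (_ : v ∈ univ) => hpt v)
    rw [Finset.sum_add_distrib] at hsum
    have hgsum : 0 ≤ ∑ v, g v := by
      rw [← Finset.sum_filter_add_sum_filter_not univ (fun v => a v ≤ b)]
      have e1 : ∑ v ∈ univ.filter (fun v => a v ≤ b), g v
          = (univ.filter fun v => a v ≤ b).card * (t - (b:ℝ)) := by
        rw [Finset.sum_congr rfl (fun v hv => ?_), Finset.sum_const, nsmul_eq_mul]
        simp only [mem_filter] at hv; simp [hg, hv.2]
      have e2 : ∑ v ∈ univ.filter (fun v => ¬ a v ≤ b), g v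
          = (univ.filter fun v => ¬ a v ≤ b).card * ((b:ℝ) - t) := by
        rw [Finset.sum_congr rfl (fun v hv => ?_), Finset.sum_const, nsmul_eq_mul]
        simp only [mem_filter] at hv; simp [hg, hv.2]
      rw [e1, e2]
      have hle : (univ.filter fun v => ¬ a v ≤ b).card ≤ (univ.filter fun v => a v ≤ b).card := by
        omega
      have : ((univ.filter fun v => ¬ a v ≤ b).card : ℝ)
          ≤ ((univ.filter fun v => a v ≤ b).card : ℝ) := by exact_mod_cast hle
      nlinarith
    linarith

/-- Every Bucklin winner `c*` belongs to the continuous L¹-deepest voting winner set: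
some maximizer `x` of the L¹ depth has its minimal coordinate at `c*`. -/
theorem stmt_1 (n m : ℕ) (hn : 1 ≤ n) (hm : 1 ≤ m)
    (σs : Fin n → Equiv.Perm (Fin m)) (cstar : Fin m)
    (hwin : ∀ c, bucklin σs cstar ≤ bucklin σs c) :
    ∃ x : Fin m → ℝ,
      (∀ y : Fin m → ℝ, depthL1 σs y ≤ depthL1 σs x) ∧
      (∀ c, x cstar ≤ x c) := by
  refine ⟨fun c => (bucklin σs c : ℝ), ?_, fun c => by simp only []; exact_mod_cast hwin c⟩
  intro y
  have hS : ∀ z : Fin m → ℝ, ∑ v, ∑ c, |(rk (σs v) c : ℝ) - z c|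
      = ∑ c, ∑ v, |(rk (σs v) c : ℝ) - z c| := fun z => Finset.sum_comm
  set Sx := ∑ v, ∑ c, |(rk (σs v) c : ℝ) - (bucklin σs c : ℝ)| with hSx
  set Sy := ∑ v, ∑ c, |(rk (σs v) c : ℝ) - y c| with hSy
  have hle : Sx ≤ Sy := by
    rw [hSx, hSy, hS, hS]
    apply Finset.sum_le_sum
    intro c _
    exact key (fun v => rk (σs v) c) (bucklin σs c) (bucklin_mem hn σs c) (bucklin_lt σs c) (y c)
  have hSx0 : 0 ≤ Sx := Finset.sum_nonneg fun v _ => Finset.sum_nonneg fun c _ => abs_nonneg _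
  have hq : (0 : ℝ) ≤ 1 / n := by positivity
  unfold depthL1
  rw [← hSx, ← hSy]
  apply one_div_le_one_div_of_le
  · nlinarith
  · nlinarith
end

section
/- Let σ_1, …, σ_n be a ranking profile of permutations of {1, …, m}, and suppose candidate c* is the strict Borda winner, i.e. ∑_{v=1}^n σ_v(c*) < ∑_{v=1}^n σ_v(c) for every candidate c ≠ c*. Then every permutation σ* of {1, …, m} minimizing ∑_{v=1}^n d_2(σ, σ_v)² = ∑_{v=1}^n ∑_{c=1}^m (σ(c) − σ_v(c))² over all permutations σ satisfies σ*(c*) = 1. In other words, the barycenter-ranking (2-Fréchet mean) deepest voting rule with the Spearman ρ distance elects the Borda winner. -/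
open Finset

/-- If `c*` is the strict Borda winner, then every barycenter ranking (2-Fréchet mean for the
Spearman ρ distance, i.e. minimizer of the sum of squared rank differences) ranks `c*` first. -/
theorem stmt_2 (n m : ℕ) (σs : Fin n → Equiv.Perm (Fin m)) (cstar : Fin m)
    (hborda : ∀ c : Fin m, c ≠ cstar → ∑ v, rk (σs v) cstar < ∑ v, rk (σs v) c)
    (σstar : Equiv.Perm (Fin m))
    (hmin : ∀ σ : Equiv.Perm (Fin m),
      ∑ v, ∑ c, ((rk σstar c : ℤ) - rk (σs v) c) ^ 2 ≤
        ∑ v, ∑ c, ((rk σ c : ℤ) - rk (σs v) c) ^ 2) :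
    rk σstar cstar = 1 := by
  by_contra hne
  have : NeZero m := NeZero.of_pos cstar.pos
  have hk0 : σstar cstar ≠ 0 := by
    intro h
    exact hne (by simp [rk, h])
  set k : Fin m := σstar cstar with hk
  set c0 : Fin m := σstar.symm 0 with hc0
  have hsc0 : σstar c0 = 0 := σstar.apply_symm_apply 0
  have hcc : c0 ≠ cstar := by
    intro h
    exact hk0 (by rw [hk, ← h]; exact hsc0)
  set σ' : Equiv.Perm (Fin m) := σstar.trans (Equiv.swap 0 k) with hσ'
  have h1 : σ' cstar = 0 := by
    simp only [hσ', Equiv.trans_apply, ← hk, Equiv.swap_apply_right]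
  have h2 : σ' c0 = k := by
    simp only [hσ', Equiv.trans_apply, hsc0, Equiv.swap_apply_left]
  have h3 : ∀ c, c ≠ cstar → c ≠ c0 → σ' c = σstar c := by
    intro c h hc
    simp only [hσ', Equiv.trans_apply]
    apply Equiv.swap_apply_of_ne_of_ne
    · intro h0; exact hc (by rw [hc0, ← h0, Equiv.symm_apply_apply])
    · intro h0; exact h (σstar.injective (h0.trans hk))
  have hpairne : cstar ≠ c0 := hcc.symm
  -- abbreviations
  set x : Fin n → ℤ := fun v => (rk (σs v) cstar : ℤ) with hx
  set y : Fin n → ℤ := fun v => (rk (σs v) c0 : ℤ) with hy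
  set a : ℤ := (k : ℕ) + 1 with ha
  have hkv : (k : ℕ) ≠ 0 := by
    intro h; exact hk0 (Fin.ext (by simp [h]))
  have ha2 : 2 ≤ a := by
    have : 1 ≤ (k : ℕ) := Nat.one_le_iff_ne_zero.mpr hkv
    omega
  have hXY : ∑ v, x v < ∑ v, y v := by
    simp only [hx, hy]
    exact_mod_cast hborda c0 hcc
  -- rank values
  have r1 : (rk σstar cstar : ℤ) = a := by simp [rk, ← hk, ha]
  have r2 : (rk σstar c0 : ℤ) = 1 := by simp [rk, hsc0]
  have r3 : (rk σ' cstar : ℤ) = 1 := by simp [rk, h1]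
  have r4 : (rk σ' c0 : ℤ) = a := by simp [rk, h2, ha]
  have hmin' := hmin σ'
  rw [Finset.sum_comm (f := fun v c => ((rk σstar c : ℤ) - rk (σs v) c) ^ 2),
    Finset.sum_comm (f := fun v c => ((rk σ' c : ℤ) - rk (σs v) c) ^ 2)] at hmin'
  -- split the sums over {cstar, c0} and its complement
  have hsplit : ∀ τ : Equiv.Perm (Fin m),
      ∑ c, ∑ v, ((rk τ c : ℤ) - rk (σs v) c) ^ 2
        = (∑ v, ((rk τ cstar : ℤ) - rk (σs v) cstar) ^ 2
            + ∑ v, ((rk τ c0 : ℤ) - rk (σs v) c0) ^ 2)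
          + ∑ c ∈ ({cstar, c0} : Finset (Fin m))ᶜ, ∑ v, ((rk τ c : ℤ) - rk (σs v) c) ^ 2 := by
    intro τ
    calc ∑ c, ∑ v, ((rk τ c : ℤ) - rk (σs v) c) ^ 2
        = ∑ c ∈ ({cstar, c0} : Finset (Fin m)), ∑ v, ((rk τ c : ℤ) - rk (σs v) c) ^ 2
          + ∑ c ∈ ({cstar, c0} : Finset (Fin m))ᶜ, ∑ v, ((rk τ c : ℤ) - rk (σs v) c) ^ 2 :=
        (Finset.sum_add_sum_compl _ _).symm
      _ = _ := by rw [Finset.sum_pair hpairne]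
  rw [hsplit σstar, hsplit σ'] at hmin'
  have hC : ∑ c ∈ ({cstar, c0} : Finset (Fin m))ᶜ, ∑ v, ((rk σ' c : ℤ) - rk (σs v) c) ^ 2
      = ∑ c ∈ ({cstar, c0} : Finset (Fin m))ᶜ, ∑ v, ((rk σstar c : ℤ) - rk (σs v) c) ^ 2 := by
    apply Finset.sum_congr rfl
    intro c hc
    simp only [Finset.mem_compl, Finset.mem_insert, Finset.mem_singleton, not_or] at hc
    rw [show rk σ' c = rk σstar c from by simp [rk, h3 c hc.1 hc.2]]
  rw [hC] at hmin'
  simp only [r1, r2, r3, r4] at hmin'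
  have hmin'' : ∑ v, (a - x v) ^ 2 + ∑ v, (1 - y v) ^ 2
      ≤ ∑ v, (1 - x v) ^ 2 + ∑ v, (a - y v) ^ 2 := by
    simpa [hx, hy] using le_of_add_le_add_right hmin'
  have hcalc : (∑ v, ((a : ℤ) - x v) ^ 2 + ∑ v, (1 - y v) ^ 2)
      - (∑ v, (1 - x v) ^ 2 + ∑ v, (a - y v) ^ 2)
      = 2 * (a - 1) * (∑ v, y v - ∑ v, x v) := by
    calc (∑ v, ((a : ℤ) - x v) ^ 2 + ∑ v, (1 - y v) ^ 2)
          - (∑ v, (1 - x v) ^ 2 + ∑ v, (a - y v) ^ 2)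
        = ∑ v, ((((a : ℤ) - x v) ^ 2 + (1 - y v) ^ 2)
            - ((1 - x v) ^ 2 + (a - y v) ^ 2)) := by
          rw [Finset.sum_sub_distrib, Finset.sum_add_distrib, Finset.sum_add_distrib]
      _ = ∑ v, 2 * (a - 1) * (y v - x v) :=
          Finset.sum_congr rfl (fun v _ => by ring)
      _ = 2 * (a - 1) * ∑ v, (y v - x v) := (Finset.mul_sum _ _ _).symm
      _ = 2 * (a - 1) * (∑ v, y v - ∑ v, x v) := by rw [Finset.sum_sub_distrib]
  have hpos : 0 < 2 * (a - 1) * (∑ v, y v - ∑ v, x v) := by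
    apply mul_pos
    · linarith
    · linarith
  linarith
end

section
/- Consider the ranking profile with m = 4 candidates c1, c2, c3, c4 and n = 5 voters whose rank vectors (σ_v(c1), σ_v(c2), σ_v(c3), σ_v(c4)) are: σ_1 = (1,2,3,4), σ_2 = (1,2,3,4), σ_3 = (4,2,3,1), σ_4 = (4,2,3,1), σ_5 = (3,2,1,4). Then: (i) for p = 1 and for p = 2, every permutation σ minimizing ∑_{v=1}^5 d_1(σ, σ_v)^p over the permutations of {1,2,3,4} satisfies σ(c1) = 1 (the footrule consensus and barycenter deepest voting rules elect c1); (ii) the Bucklin values are b(c1) = 3, b(c2) = 2, b(c3) = 3, b(c4) = 4, so c2 is the unique Bucklin winner. Hence Bucklin's voting rule does not coincide with the deepest voting rule associated with the Spearman footrule distance, neither for the consensus ranking (p = 1) nor for the barycenter ranking (p = 2). -/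
open Finset

/-- The Spearman footrule distance `d₁(σ,τ) = ∑_c |σ(c) − τ(c)|`. -/
def d1 {m : ℕ} (σ τ : Equiv.Perm (Fin m)) : ℕ :=
  ∑ c, ((rk σ c : ℤ) - rk τ c).natAbs

lemma perm_eq {σ τ : Equiv.Perm (Fin 4)} (h : rk σ = rk τ) : σ = τ := by
  ext c
  have := congrFun h c
  simp only [rk] at this
  omega

lemma sInf_eq' {s : Set ℕ} {a : ℕ} (h : a ∈ s) (h' : ∀ k < a, k ∉ s) : sInf s = a :=
  le_antisymm (Nat.sInf_le h) (by
    by_contra hlt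
    push_neg at hlt
    exact h' _ hlt (Nat.sInf_mem ⟨a, h⟩))

lemma buck_eq (c : Fin 4) (a : ℕ)
    (h : (5:ℕ) < 2 * (univ.filter fun v => rk ((![Equiv.refl _, Equiv.refl _, Equiv.swap 0 3, Equiv.swap 0 3, Equiv.swap 0 2] : Fin 5 → Equiv.Perm (Fin 4)) v) c ≤ a).card)
    (h' : ∀ k < a, ¬ ((5:ℕ) < 2 * (univ.filter fun v => rk ((![Equiv.refl _, Equiv.refl _, Equiv.swap 0 3, Equiv.swap 0 3, Equiv.swap 0 2] : Fin 5 → Equiv.Perm (Fin 4)) v) c ≤ k).card)) :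
    bucklin ![Equiv.refl _, Equiv.refl _, Equiv.swap 0 3, Equiv.swap 0 3, Equiv.swap 0 2] c = a :=
  sInf_eq' h h'

/-- On the profile σ₁ = σ₂ = (1,2,3,4), σ₃ = σ₄ = (4,2,3,1), σ₅ = (3,2,1,4):
every footrule 1-Fréchet mean and every footrule 2-Fréchet mean ranks `c1` first,
while the Bucklin values are 3, 2, 3, 4 and `c2` is the unique Bucklin winner.
Hence Bucklin's rule is not the footrule deepest voting rule for `p = 1` nor `p = 2`. -/
theorem stmt_3 (σ1 σ2 σ3 σ4 σ5 : Equiv.Perm (Fin 4))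
    (h1 : rk σ1 = ![1,2,3,4]) (h2 : rk σ2 = ![1,2,3,4])
    (h3 : rk σ3 = ![4,2,3,1]) (h4 : rk σ4 = ![4,2,3,1])
    (h5 : rk σ5 = ![3,2,1,4]) :
    (∀ σ : Equiv.Perm (Fin 4),
      (∀ τ : Equiv.Perm (Fin 4),
        ∑ v, d1 σ (![σ1,σ2,σ3,σ4,σ5] v) ≤ ∑ v, d1 τ (![σ1,σ2,σ3,σ4,σ5] v)) →
      rk σ 0 = 1) ∧
    (∀ σ : Equiv.Perm (Fin 4),
      (∀ τ : Equiv.Perm (Fin 4),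
        ∑ v, (d1 σ (![σ1,σ2,σ3,σ4,σ5] v)) ^ 2 ≤ ∑ v, (d1 τ (![σ1,σ2,σ3,σ4,σ5] v)) ^ 2) →
      rk σ 0 = 1) ∧
    bucklin ![σ1,σ2,σ3,σ4,σ5] 0 = 3 ∧
    bucklin ![σ1,σ2,σ3,σ4,σ5] 1 = 2 ∧
    bucklin ![σ1,σ2,σ3,σ4,σ5] 2 = 3 ∧
    bucklin ![σ1,σ2,σ3,σ4,σ5] 3 = 4 ∧
    (∀ c : Fin 4, c ≠ 1 →
      bucklin ![σ1,σ2,σ3,σ4,σ5] 1 < bucklin ![σ1,σ2,σ3,σ4,σ5] c) := by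
  
  obtain rfl : σ1 = Equiv.refl _ := perm_eq (h1.trans (by decide))
  obtain rfl : σ2 = Equiv.refl _ := perm_eq (h2.trans (by decide))
  obtain rfl : σ3 = Equiv.swap 0 3 := perm_eq (h3.trans (by decide))
  obtain rfl : σ4 = Equiv.swap 0 3 := perm_eq (h4.trans (by decide))
  obtain rfl : σ5 = Equiv.swap 0 2 := perm_eq (h5.trans (by decide))
  have b0 := buck_eq 0 3 (by decide) (by decide)
  have b1 := buck_eq 1 2 (by decide) (by decide)
  have b2 := buck_eq 2 3 (by decide) (by decide)
  have b3 := buck_eq 3 4 (by decide) (by decide)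
  refine ⟨by decide, by decide, b0, b1, b2, b3, ?_⟩
  intro c hc
  fin_cases c <;> simp_all
end

section
/- Define on permutations of {1, …, m} the weighted Hamming dissimilarity d(σ, τ) = ∑_{c=1}^m w_{σ(c), τ(c)}·1{σ(c) ≠ τ(c)}, where w_{r,r'} = 1 if r = 1 or r' = 1 and w_{r,r'} = 0 otherwise. Then: (i) for all permutations σ, τ, d(σ, τ) = 2 if σ⁻¹(1) ≠ τ⁻¹(1) and d(σ, τ) = 0 if σ⁻¹(1) = τ⁻¹(1); (ii) for any ranking profile σ_1, …, σ_n, a permutation σ* minimizes ∑_{v=1}^n d(σ, σ_v) over all permutations σ if and only if the candidate σ*⁻¹(1) that it ranks first is a Plurality winner, i.e. maximizes #{v : σ_v(c) = 1} over all candidates c. -/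
open Finset

/-- The weights `W(1,(1))`: `w_{r,r'} = 1` if `r = 1` or `r' = 1`, and `0` otherwise. -/
def wPlu (r r' : ℕ) : ℕ := if r = 1 ∨ r' = 1 then 1 else 0

/-- The weighted Hamming dissimilarity with weights `W(1,(1))`:
`d(σ,τ) = ∑_c w_{σ(c),τ(c)} · 1{σ(c) ≠ τ(c)}`. -/
def dwPlu {m : ℕ} (σ τ : Equiv.Perm (Fin m)) : ℕ :=
  ∑ c, wPlu (rk σ c) (rk τ c) * (if rk σ c ≠ rk τ c then 1 else 0)

lemma rk_eq_one_iff {m : ℕ} (hm : 0 < m) (σ : Equiv.Perm (Fin m)) (c : Fin m) :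
    rk σ c = 1 ↔ c = σ.symm ⟨0, hm⟩ := by
  unfold rk
  rw [Equiv.eq_symm_apply]
  constructor
  · intro h; ext; simpa using h
  · intro h; rw [h]

lemma dwPlu_eq {m : ℕ} (hm : 0 < m) (σ τ : Equiv.Perm (Fin m)) :
    dwPlu σ τ = if σ.symm ⟨0, hm⟩ = τ.symm ⟨0, hm⟩ then 0 else 2 := by
  set a := σ.symm ⟨0, hm⟩ with ha0
  set b := τ.symm ⟨0, hm⟩ with hb0
  have ha : ∀ c, rk σ c = 1 ↔ c = a := rk_eq_one_iff hm σ
  have hb : ∀ c, rk τ c = 1 ↔ c = b := rk_eq_one_iff hm τ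
  by_cases hab : a = b
  · rw [if_pos hab]
    apply Finset.sum_eq_zero
    intro c _
    by_cases hc : c = b
    · have h1 : rk σ c = 1 := (ha c).2 (hab ▸ hc)
      have h2 : rk τ c = 1 := (hb c).2 hc
      simp [h1, h2]
    · have h1 : rk σ c ≠ 1 := fun h => hc (hab ▸ (ha c).1 h)
      have h2 : rk τ c ≠ 1 := fun h => hc ((hb c).1 h)
      simp [wPlu, h1, h2]
  · rw [if_neg hab]
    unfold dwPlu
    rw [← Finset.sum_subset (Finset.subset_univ ({a, b} : Finset (Fin m)))]
    · rw [Finset.sum_pair hab]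
      have h1 : rk σ a = 1 := (ha a).2 rfl
      have h2 : rk τ b = 1 := (hb b).2 rfl
      have h3 : rk τ a ≠ 1 := fun h => hab ((hb a).1 h)
      have h4 : rk σ b ≠ 1 := fun h => hab ((ha b).1 h).symm
      rw [h1, h2]
      unfold wPlu
      rw [if_pos (Or.inl rfl), if_pos (Or.inr rfl),
        if_pos (fun h : (1:ℕ) = rk τ a => h3 h.symm),
        if_pos (fun h : rk σ b = 1 => h4 h)]
    · intro c _ hc
      simp only [Finset.mem_insert, Finset.mem_singleton, not_or] at hc
      have h1 : rk σ c ≠ 1 := fun h => hc.1 ((ha c).1 h)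
      have h2 : rk τ c ≠ 1 := fun h => hc.2 ((hb c).1 h)
      simp [wPlu, h1, h2]

/-- (i) `d(σ,τ)` is `2` or `0` according as the top-ranked candidates of `σ` and `τ` differ
or coincide; (ii) `σ*` minimizes `∑ᵥ d(σ, σᵥ)` iff the candidate it ranks first is a
Plurality winner. -/
theorem stmt_4 (m n : ℕ) (hm : 0 < m) (σs : Fin n → Equiv.Perm (Fin m)) :
    (∀ σ τ : Equiv.Perm (Fin m),
      (σ.symm ⟨0, hm⟩ ≠ τ.symm ⟨0, hm⟩ → dwPlu σ τ = 2) ∧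
      (σ.symm ⟨0, hm⟩ = τ.symm ⟨0, hm⟩ → dwPlu σ τ = 0)) ∧
    (∀ σstar : Equiv.Perm (Fin m),
      (∀ σ : Equiv.Perm (Fin m), ∑ v, dwPlu σstar (σs v) ≤ ∑ v, dwPlu σ (σs v)) ↔
      (∀ c : Fin m,
        (univ.filter fun v => rk (σs v) c = 1).card ≤
          (univ.filter fun v => rk (σs v) (σstar.symm ⟨0, hm⟩) = 1).card)) := by
  have key : ∀ σ : Equiv.Perm (Fin m),
      ∑ v, dwPlu σ (σs v)
        + 2 * (univ.filter fun v => rk (σs v) (σ.symm ⟨0, hm⟩) = 1).card = 2 * n := by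
    intro σ
    rw [Finset.card_filter]
    have : ∀ v : Fin n, dwPlu σ (σs v)
        + 2 * (if rk (σs v) (σ.symm ⟨0, hm⟩) = 1 then 1 else 0) = 2 := by
      intro v
      rw [dwPlu_eq hm]; simp only [rk_eq_one_iff hm]
      by_cases h : σ.symm ⟨0, hm⟩ = (σs v).symm ⟨0, hm⟩ <;> simp [h]
    calc ∑ v, dwPlu σ (σs v)
          + 2 * ∑ v, (if rk (σs v) (σ.symm ⟨0, hm⟩) = 1 then 1 else 0)
        = ∑ v : Fin n, (dwPlu σ (σs v)
          + 2 * (if rk (σs v) (σ.symm ⟨0, hm⟩) = 1 then 1 else 0)) := by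
          rw [Finset.sum_add_distrib, Finset.mul_sum]
      _ = ∑ v : Fin n, 2 := by simp only [this]
      _ = 2 * n := by simp [mul_comm]
  refine ⟨fun σ τ => ⟨fun h => by rw [dwPlu_eq hm, if_neg h],
    fun h => by rw [dwPlu_eq hm, if_pos h]⟩, fun σstar => ⟨?_, ?_⟩⟩
  · intro hmin c
    have hσ : (Equiv.swap (⟨0, hm⟩ : Fin m) c).symm ⟨0, hm⟩ = c := by simp
    have h1 := key σstar
    have h2 := key (Equiv.swap (⟨0, hm⟩ : Fin m) c)
    have h3 := hmin (Equiv.swap (⟨0, hm⟩ : Fin m) c)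
    rw [hσ] at h2
    omega
  · intro hc σ
    have h1 := key σstar
    have h2 := key σ
    have h3 := hc (σ.symm ⟨0, hm⟩)
    omega
end

section
/- Define on permutations of {1, …, m} the weighted Hamming dissimilarity d(σ, τ) = ∑_{c=1}^m w_{σ(c), τ(c)}·1{σ(c) ≠ τ(c)}, where w_{r,r'} = −1 if r = m or r' = m and w_{r,r'} = 0 otherwise. Then: (i) for all permutations σ, τ, d(σ, τ) = −2 if σ⁻¹(m) ≠ τ⁻¹(m) and d(σ, τ) = 0 if σ⁻¹(m) = τ⁻¹(m); (ii) for any ranking profile σ_1, …, σ_n, a permutation σ* minimizes ∑_{v=1}^n d(σ, σ_v) over all permutations σ if and only if the candidate σ*⁻¹(m) that it ranks last minimizes #{v : σ_v(c) = m} over all candidates c (the Antiplurality criterion: the candidate placed last is one ranked last by the fewest voters). -/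
open Finset

/-- The weights `W(−1,(m))`: `w_{r,r'} = −1` if `r = m` or `r' = m`, and `0` otherwise. -/
def wAnti (m r r' : ℕ) : ℤ := if r = m ∨ r' = m then -1 else 0

/-- The weighted Hamming dissimilarity with weights `W(−1,(m))`:
`d(σ,τ) = ∑_c w_{σ(c),τ(c)} · 1{σ(c) ≠ τ(c)}`. -/
def dwAnti {m : ℕ} (σ τ : Equiv.Perm (Fin m)) : ℤ :=
  ∑ c, wAnti m (rk σ c) (rk τ c) * (if rk σ c ≠ rk τ c then 1 else 0)

lemma rk_eq_iff {m : ℕ} (hm : 0 < m) (σ : Equiv.Perm (Fin m)) (c : Fin m) :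
    rk σ c = m ↔ σ c = ⟨m - 1, Nat.sub_lt hm Nat.one_pos⟩ := by
  have := (σ c).isLt
  unfold rk
  constructor
  · intro h; ext; simp; omega
  · intro h; rw [h]; simp; omega

lemma dw_eq {m : ℕ} (hm : 0 < m) (σ τ : Equiv.Perm (Fin m)) :
    dwAnti σ τ =
      if σ.symm ⟨m - 1, Nat.sub_lt hm Nat.one_pos⟩ = τ.symm ⟨m - 1, Nat.sub_lt hm Nat.one_pos⟩
      then 0 else -2 := by
  set L : Fin m := ⟨m - 1, Nat.sub_lt hm Nat.one_pos⟩ with hL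
  by_cases hst : σ.symm L = τ.symm L
  · rw [if_pos hst]
    rw [dwAnti]
    apply Finset.sum_eq_zero
    intro c _
    by_cases h1 : σ c = L
    · have h2 : τ c = L := by
        have : c = σ.symm L := by rw [Equiv.eq_symm_apply]; exact h1
        rw [this, hst, Equiv.apply_symm_apply]
      rw [(rk_eq_iff hm σ c).2 h1, (rk_eq_iff hm τ c).2 h2]
      simp
    · have h2 : τ c ≠ L := by
        intro h
        exact h1 (by
          have : c = τ.symm L := by rw [Equiv.eq_symm_apply]; exact h
          rw [this, ← hst, Equiv.apply_symm_apply])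
      have r1 : rk σ c ≠ m := fun h => h1 ((rk_eq_iff hm σ c).1 h)
      have r2 : rk τ c ≠ m := fun h => h2 ((rk_eq_iff hm τ c).1 h)
      rw [wAnti, if_neg (by tauto)]
      ring
  · rw [if_neg hst]
    rw [dwAnti]
    have key : ∀ c ∈ univ, wAnti m (rk σ c) (rk τ c) * (if rk σ c ≠ rk τ c then (1:ℤ) else 0)
        = (if c = σ.symm L then (-1:ℤ) else 0) + (if c = τ.symm L then (-1:ℤ) else 0) := by
      intro c _
      by_cases h1 : σ c = L
      · have hc1 : c = σ.symm L := (Equiv.eq_symm_apply σ).2 h1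
        have hc2 : c ≠ τ.symm L := fun h => hst (hc1 ▸ h)
        have h2 : τ c ≠ L := fun h => hc2 ((Equiv.eq_symm_apply τ).2 h)
        have r1 : rk σ c = m := (rk_eq_iff hm σ c).2 h1
        have r2 : rk τ c ≠ m := fun h => h2 ((rk_eq_iff hm τ c).1 h)
        rw [if_pos hc1, if_neg hc2, wAnti, if_pos (Or.inl r1), if_pos (by omega)]
        ring
      · have hc1 : c ≠ σ.symm L := fun h => h1 ((Equiv.eq_symm_apply σ).1 h)
        have r1 : rk σ c ≠ m := fun h => h1 ((rk_eq_iff hm σ c).1 h)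
        by_cases h2 : τ c = L
        · have hc2 : c = τ.symm L := (Equiv.eq_symm_apply τ).2 h2
          have r2 : rk τ c = m := (rk_eq_iff hm τ c).2 h2
          rw [if_neg hc1, if_pos hc2, wAnti, if_pos (Or.inr r2), if_pos (by omega)]
          ring
        · have hc2 : c ≠ τ.symm L := fun h => h2 ((Equiv.eq_symm_apply τ).1 h)
          have r2 : rk τ c ≠ m := fun h => h2 ((rk_eq_iff hm τ c).1 h)
          rw [if_neg hc1, if_neg hc2, wAnti, if_neg (by tauto)]
          ring
    rw [Finset.sum_congr rfl key, Finset.sum_add_distrib,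
      Finset.sum_ite_eq' univ, Finset.sum_ite_eq' univ]
    simp

lemma sum_d {m n : ℕ} (hm : 0 < m) (σs : Fin n → Equiv.Perm (Fin m)) (σ : Equiv.Perm (Fin m)) :
    ∑ v, dwAnti σ (σs v) =
      2 * ((univ.filter fun v =>
        rk (σs v) (σ.symm ⟨m - 1, Nat.sub_lt hm Nat.one_pos⟩) = m).card : ℤ) - 2 * n := by
  set L : Fin m := ⟨m - 1, Nat.sub_lt hm Nat.one_pos⟩ with hL
  have key : ∀ v ∈ (univ : Finset (Fin n)), dwAnti σ (σs v)
      = 2 * (if rk (σs v) (σ.symm L) = m then (1:ℤ) else 0) - 2 := by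
    intro v _
    rw [dw_eq hm]
    have hiff : σ.symm L = (σs v).symm L ↔ rk (σs v) (σ.symm L) = m := by
      rw [rk_eq_iff hm, Equiv.eq_symm_apply]
    by_cases h : rk (σs v) (σ.symm L) = m
    · rw [if_pos (hiff.2 h), if_pos h]; ring
    · rw [if_neg (fun hh => h (hiff.1 hh)), if_neg h]; ring
  rw [Finset.sum_congr rfl key, Finset.sum_sub_distrib, ← Finset.mul_sum, Finset.sum_boole]
  simp [mul_comm]

/-- (i) `d(σ,τ)` is `−2` or `0` according as the last-ranked candidates of `σ` and `τ` differ
or coincide; (ii) `σ*` minimizes `∑ᵥ d(σ, σᵥ)` iff the candidate it ranks last is ranked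
last by the fewest voters (Antiplurality criterion). -/
theorem stmt_5 (m n : ℕ) (hm : 0 < m) (σs : Fin n → Equiv.Perm (Fin m)) :
    (∀ σ τ : Equiv.Perm (Fin m),
      (σ.symm ⟨m - 1, Nat.sub_lt hm Nat.one_pos⟩ ≠ τ.symm ⟨m - 1, Nat.sub_lt hm Nat.one_pos⟩ →
        dwAnti σ τ = -2) ∧
      (σ.symm ⟨m - 1, Nat.sub_lt hm Nat.one_pos⟩ = τ.symm ⟨m - 1, Nat.sub_lt hm Nat.one_pos⟩ →
        dwAnti σ τ = 0)) ∧
    (∀ σstar : Equiv.Perm (Fin m),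
      (∀ σ : Equiv.Perm (Fin m), ∑ v, dwAnti σstar (σs v) ≤ ∑ v, dwAnti σ (σs v)) ↔
      (∀ c : Fin m,
        (univ.filter fun v =>
            rk (σs v) (σstar.symm ⟨m - 1, Nat.sub_lt hm Nat.one_pos⟩) = m).card ≤
          (univ.filter fun v => rk (σs v) c = m).card)) := by
  set L : Fin m := ⟨m - 1, Nat.sub_lt hm Nat.one_pos⟩ with hL
  constructor
  · intro σ τ
    exact ⟨fun h => by rw [dw_eq hm, if_neg h], fun h => by rw [dw_eq hm, if_pos h]⟩
  · intro σstar
    constructor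
    · intro h c
      have h1 := h (Equiv.swap c L)
      rw [sum_d hm, sum_d hm] at h1
      have hswap : (Equiv.swap c L).symm L = c := by
        rw [Equiv.symm_swap, Equiv.swap_apply_right]
      rw [hswap] at h1
      simp only [← hL] at h1 ⊢
      omega
    · intro h σ
      rw [sum_d hm, sum_d hm]
      have := h (σ.symm L)
      simp only [← hL] at this ⊢
      omega
end

section
/- Let σ_1, …, σ_n be a ranking profile of permutations of {1, …, m} and suppose every voter ranks candidate c* first, i.e. σ_v(c*) = 1 for all v. Then for every real p ≥ 1 there exists a permutation σ* minimizing ∑_{v=1}^n d_∞(σ, σ_v)^p over all permutations σ of {1, …, m} such that σ*(c*) = 1. (For the d_∞ distance, some p-Fréchet mean always ranks the unanimous favourite first.) -/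
open Finset

/-- The ∞-Minkowski–Hölder distance `d_∞(σ,τ) = max_c |σ(c) − τ(c)|`. -/
def dInf {m : ℕ} (σ τ : Equiv.Perm (Fin m)) : ℕ :=
  univ.sup fun c => ((rk σ c : ℤ) - rk τ c).natAbs

/-- If all voters rank `c*` first, then for every real `p ≥ 1` there exists a minimizer of
`∑ᵥ d_∞(σ, σᵥ)^p` ranking `c*` first: some d_∞-based p-Fréchet mean ranks the unanimous
favourite first. -/
theorem stmt_10 (n m : ℕ) (σs : Fin n → Equiv.Perm (Fin m)) (cstar : Fin m)
    (huna : ∀ v, rk (σs v) cstar = 1) (p : ℝ) (hp : 1 ≤ p) :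
    ∃ σstar : Equiv.Perm (Fin m),
      (∀ σ : Equiv.Perm (Fin m),
        ∑ v, (dInf σstar (σs v) : ℝ) ^ p ≤ ∑ v, (dInf σ (σs v) : ℝ) ^ p) ∧
      rk σstar cstar = 1 := by
  haveI : NeZero m := ⟨(Fin.pos cstar).ne'⟩
  -- key lemma: moving cstar to rank 1 doesn't increase dInf to a τ with τ cstar = 0
  have key : ∀ (σ τ : Equiv.Perm (Fin m)), τ cstar = 0 →
      dInf (Equiv.swap 0 (σ cstar) * σ) τ ≤ dInf σ τ := by
    intro σ τ hτ
    apply Finset.sup_le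
    intro c _
    by_cases h1 : σ c = σ cstar
    · have hc : c = cstar := σ.injective h1
      subst hc
      simp [rk, Equiv.Perm.mul_apply, Equiv.swap_apply_right, hτ, Fin.val_zero]
    · by_cases h2 : σ c = 0
      · have hval : (Equiv.swap 0 (σ cstar) * σ) c = σ cstar := by
          simp [Equiv.Perm.mul_apply, h2, Equiv.swap_apply_left]
        have hA : ((rk σ cstar : ℤ) - rk τ cstar).natAbs ≤ dInf σ τ :=
          by unfold dInf; exact Finset.le_sup (f := fun c => ((rk σ c : ℤ) - rk τ c).natAbs) (mem_univ _)
        have hB : ((rk σ c : ℤ) - rk τ c).natAbs ≤ dInf σ τ :=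
          by unfold dInf; exact Finset.le_sup (f := fun c => ((rk σ c : ℤ) - rk τ c).natAbs) (mem_univ _)
        simp only [rk, hval, hτ, h2, Fin.val_zero] at *
        omega
      · have hval : (Equiv.swap 0 (σ cstar) * σ) c = σ c := by
          simp [Equiv.Perm.mul_apply, Equiv.swap_apply_of_ne_of_ne h2 h1]
        have : ((rk σ c : ℤ) - rk τ c).natAbs ≤ dInf σ τ := by unfold dInf; exact Finset.le_sup (f := fun c => ((rk σ c : ℤ) - rk τ c).natAbs) (mem_univ _)
        simpa [rk, hval] using this
  have hσs0 : ∀ v, σs v cstar = 0 := by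
    intro v
    have := huna v
    simp only [rk] at this
    have : ((σs v) cstar : ℕ) = 0 := by omega
    exact Fin.ext (by simp [this, Fin.val_zero])
  obtain ⟨σ0, -, hmin⟩ := Finset.exists_min_image (univ : Finset (Equiv.Perm (Fin m)))
    (fun σ => ∑ v, (dInf σ (σs v) : ℝ) ^ p) ⟨1, mem_univ 1⟩
  refine ⟨Equiv.swap 0 (σ0 cstar) * σ0, fun σ => ?_, ?_⟩
  · calc ∑ v, (dInf (Equiv.swap 0 (σ0 cstar) * σ0) (σs v) : ℝ) ^ p
        ≤ ∑ v, (dInf σ0 (σs v) : ℝ) ^ p := by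
          apply Finset.sum_le_sum
          intro v _
          exact Real.rpow_le_rpow (Nat.cast_nonneg _)
            (Nat.cast_le.2 (key σ0 (σs v) (hσs0 v))) (le_trans zero_le_one hp)
      _ ≤ ∑ v, (dInf σ (σs v) : ℝ) ^ p := hmin σ (mem_univ σ)
  · simp [rk, Equiv.Perm.mul_apply, Equiv.swap_apply_right, Fin.val_zero]
end

section
/- Consider the ranking profile with m = 6 candidates c1, …, c6 and n = 5 voters whose rank vectors (σ_v(c1), …, σ_v(c6)) are: σ_1 = (1,4,6,3,5,2), σ_2 = (1,6,4,5,2,3), σ_3 = (1,4,6,3,5,2), σ_4 = (1,2,4,6,5,3), σ_5 = (1,6,5,4,3,2). All voters rank c1 first, yet both the permutation α with rank vector (1,5,6,3,4,2) and the permutation β with rank vector (2,5,6,3,4,1) attain the minimum of ∑_{v=1}^5 d_∞(σ, σ_v)² over all permutations σ of {1, …, 6}. In particular, a 2-Fréchet mean with respect to d_∞ ranks c6 first, so the d_∞-based 2-Fréchet deepest voting rule does not have a unique winner and fails Unanimity when the minimizer is not unique. -/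
open Finset

def dv (σ : Equiv.Perm (Fin 6)) (w : Fin 6 → ℕ) : ℕ :=
  univ.sup fun c => ((rk σ c : ℤ) - (w c : ℕ)).natAbs

set_option maxRecDepth 20000 in
lemma key_s11 : ∀ σ : Equiv.Perm (Fin 6),
    16 ≤ dv σ ![1,4,6,3,5,2] ^ 2 + dv σ ![1,6,4,5,2,3] ^ 2 +
      dv σ ![1,4,6,3,5,2] ^ 2 + dv σ ![1,2,4,6,5,3] ^ 2 +
      dv σ ![1,6,5,4,3,2] ^ 2 := by decide

/-- On the profile σ₁ = (1,4,6,3,5,2), σ₂ = (1,6,4,5,2,3), σ₃ = (1,4,6,3,5,2),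
σ₄ = (1,2,4,6,5,3), σ₅ = (1,6,5,4,3,2), in which every voter ranks `c1` first,
both α = (1,5,6,3,4,2) and β = (2,5,6,3,4,1) attain the minimum of `∑ᵥ d_∞(σ, σᵥ)²`;
in particular the 2-Fréchet mean β ranks `c6` first, so the d_∞-based 2-Fréchet deepest
voting rule has no unique winner and fails Unanimity here. -/
theorem stmt_11 (σ1 σ2 σ3 σ4 σ5 α β : Equiv.Perm (Fin 6))
    (h1 : rk σ1 = ![1,4,6,3,5,2]) (h2 : rk σ2 = ![1,6,4,5,2,3])
    (h3 : rk σ3 = ![1,4,6,3,5,2]) (h4 : rk σ4 = ![1,2,4,6,5,3])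
    (h5 : rk σ5 = ![1,6,5,4,3,2])
    (hα : rk α = ![1,5,6,3,4,2]) (hβ : rk β = ![2,5,6,3,4,1]) :
    (∀ v, rk (![σ1,σ2,σ3,σ4,σ5] v) 0 = 1) ∧
    (∀ σ : Equiv.Perm (Fin 6),
      ∑ v, (dInf α (![σ1,σ2,σ3,σ4,σ5] v)) ^ 2 ≤ ∑ v, (dInf σ (![σ1,σ2,σ3,σ4,σ5] v)) ^ 2) ∧
    (∀ σ : Equiv.Perm (Fin 6),
      ∑ v, (dInf β (![σ1,σ2,σ3,σ4,σ5] v)) ^ 2 ≤ ∑ v, (dInf σ (![σ1,σ2,σ3,σ4,σ5] v)) ^ 2) ∧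
    rk β 5 = 1 := by
  have hr : ∀ σ : Equiv.Perm (Fin 6),
      ∑ v, (dInf σ (![σ1,σ2,σ3,σ4,σ5] v)) ^ 2 =
      dv σ ![1,4,6,3,5,2] ^ 2 + dv σ ![1,6,4,5,2,3] ^ 2 +
      dv σ ![1,4,6,3,5,2] ^ 2 + dv σ ![1,2,4,6,5,3] ^ 2 +
      dv σ ![1,6,5,4,3,2] ^ 2 := by
    intro σ
    simp [Fin.sum_univ_five, dInf, dv, h1, h2, h3, h4, h5]
  have hαv : ∑ v, (dInf α (![σ1,σ2,σ3,σ4,σ5] v)) ^ 2 = 16 := by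
    rw [hr]; simp only [dv, hα]; decide
  have hβv : ∑ v, (dInf β (![σ1,σ2,σ3,σ4,σ5] v)) ^ 2 = 16 := by
    rw [hr]; simp only [dv, hβ]; decide
  refine ⟨?_, ?_, ?_, ?_⟩
  · intro v; fin_cases v <;> simp [h1, h2, h3, h4, h5]
  · intro σ; rw [hαv, hr]; exact key_s11 σ
  · intro σ; rw [hβv, hr]; exact key_s11 σ
  · rw [hβ]; rfl
end

section
/- Consider the ranking profile with m = 3 candidates c1, c2, c3 and n = 7 voters whose rank vectors (σ_v(c1), σ_v(c2), σ_v(c3)) are: σ_1 = σ_2 = (1,2,3), σ_3 = σ_4 = (2,1,3), σ_5 = σ_6 = (2,3,1), σ_7 = (3,1,2). Then: (i) c1 is a Condorcet winner of this profile; (ii) for every real p ≥ 1, the permutation with rank vector (2,1,3) is the unique minimizer of ∑_{v=1}^7 d_H(σ, σ_v)^p over all permutations σ of {1,2,3}. Since this minimizer ranks c2 (and not the Condorcet winner c1) first, the Hamming-based p-Fréchet mean voting rule does not satisfy the Condorcet-winner property for any p ≥ 1. -/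
open Finset

/-- The Hamming distance on permutations: the number of positions where they differ. -/
def dH {m : ℕ} (σ τ : Equiv.Perm (Fin m)) : ℕ :=
  (univ.filter fun c => rk σ c ≠ rk τ c).card


private def p123 : Equiv.Perm (Fin 3) := 1
private def p213 : Equiv.Perm (Fin 3) := Equiv.swap 0 1
private def p132 : Equiv.Perm (Fin 3) := Equiv.swap 1 2
private def p321 : Equiv.Perm (Fin 3) := Equiv.swap 0 2
private def p231 : Equiv.Perm (Fin 3) := finRotate 3
private def p312 : Equiv.Perm (Fin 3) := (finRotate 3)⁻¹

private lemma rk_inj {m : ℕ} {σ τ : Equiv.Perm (Fin m)} (h : rk σ = rk τ) : σ = τ := by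
  ext c
  have := congrFun h c
  simp [rk] at this
  exact this ▸ rfl


/-- On the profile σ₁ = σ₂ = (1,2,3), σ₃ = σ₄ = (2,1,3), σ₅ = σ₆ = (2,3,1), σ₇ = (3,1,2):
(i) `c1` is a Condorcet winner; (ii) for every real `p ≥ 1` the permutation π = (2,1,3) is
the unique minimizer of `∑ᵥ d_H(σ, σᵥ)^p`; π ranks `c2` first, so the Hamming-based
p-Fréchet rule fails the Condorcet-winner property for every `p ≥ 1`. -/
theorem stmt_15 (σ1 σ2 σ3 σ4 σ5 σ6 σ7 π : Equiv.Perm (Fin 3))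
    (h1 : rk σ1 = ![1,2,3]) (h2 : rk σ2 = ![1,2,3])
    (h3 : rk σ3 = ![2,1,3]) (h4 : rk σ4 = ![2,1,3])
    (h5 : rk σ5 = ![2,3,1]) (h6 : rk σ6 = ![2,3,1])
    (h7 : rk σ7 = ![3,1,2]) (hπ : rk π = ![2,1,3]) :
    (∀ c : Fin 3, c ≠ 0 →
      (univ.filter fun v =>
          rk (![σ1,σ2,σ3,σ4,σ5,σ6,σ7] v) c < rk (![σ1,σ2,σ3,σ4,σ5,σ6,σ7] v) 0).card <
        (univ.filter fun v =>
          rk (![σ1,σ2,σ3,σ4,σ5,σ6,σ7] v) 0 < rk (![σ1,σ2,σ3,σ4,σ5,σ6,σ7] v) c).card) ∧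
    (∀ p : ℝ, 1 ≤ p → ∀ σ : Equiv.Perm (Fin 3), σ ≠ π →
      ∑ v, (dH π (![σ1,σ2,σ3,σ4,σ5,σ6,σ7] v) : ℝ) ^ p <
        ∑ v, (dH σ (![σ1,σ2,σ3,σ4,σ5,σ6,σ7] v) : ℝ) ^ p) ∧
    rk π 1 = 1 := by
  have e123 : rk p123 = ![1,2,3] := by funext c; fin_cases c <;> decide
  have e213 : rk p213 = ![2,1,3] := by funext c; fin_cases c <;> decide
  have e231 : rk p231 = ![2,3,1] := by funext c; fin_cases c <;> decide
  have e312 : rk p312 = ![3,1,2] := by funext c; fin_cases c <;> decide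
  have g1 : σ1 = p123 := rk_inj (h1.trans e123.symm)
  have g2 : σ2 = p123 := rk_inj (h2.trans e123.symm)
  have g3 : σ3 = p213 := rk_inj (h3.trans e213.symm)
  have g4 : σ4 = p213 := rk_inj (h4.trans e213.symm)
  have g5 : σ5 = p231 := rk_inj (h5.trans e231.symm)
  have g6 : σ6 = p231 := rk_inj (h6.trans e231.symm)
  have g7 : σ7 = p312 := rk_inj (h7.trans e312.symm)
  have gπ : π = p213 := rk_inj (hπ.trans e213.symm)
  subst g1 g2 g3 g4 g5 g6 g7 gπ
  refine ⟨?_, ?_, by decide⟩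
  · intro c hc
    fin_cases c
    · exact absurd rfl hc
    · decide
    · decide
  · intro p hp σ hσ
    have h0 : (0:ℝ) ^ p = 0 := Real.zero_rpow (by linarith)
    have h23 : (2:ℝ) ^ p < 3 ^ p :=
      Real.rpow_lt_rpow (by norm_num) (by norm_num) (by linarith)
    have h2pos : (0:ℝ) < 2 ^ p := Real.rpow_pos_of_pos (by norm_num) p
    have h3pos : (0:ℝ) < 3 ^ p := Real.rpow_pos_of_pos (by norm_num) p
    have hall : ∀ τ : Equiv.Perm (Fin 3),
        τ = p123 ∨ τ = p213 ∨ τ = p132 ∨ τ = p321 ∨ τ = p231 ∨ τ = p312 := by decide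
    have hcases := hall σ
    have d1 : dH p213 p123 = 2 := by decide
    have d2 : dH p213 p213 = 0 := by decide
    have d3 : dH p213 p231 = 2 := by decide
    have d4 : dH p213 p312 = 2 := by decide
    rcases hcases with rfl | rfl | rfl | rfl | rfl | rfl
    · have a1 : dH p123 p123 = 0 := by decide
      have a2 : dH p123 p213 = 2 := by decide
      have a3 : dH p123 p231 = 3 := by decide
      have a4 : dH p123 p312 = 3 := by decide
      simp only [Fin.sum_univ_succ, Fin.sum_univ_zero, Matrix.cons_val_zero,
        Matrix.cons_val_succ, d1, d2, d3, d4, a1, a2, a3, a4]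
      push_cast
      rw [h0]
      linarith
    · exact absurd rfl hσ
    · have a1 : dH p132 p123 = 2 := by decide
      have a2 : dH p132 p213 = 3 := by decide
      have a3 : dH p132 p231 = 2 := by decide
      have a4 : dH p132 p312 = 2 := by decide
      simp only [Fin.sum_univ_succ, Fin.sum_univ_zero, Matrix.cons_val_zero,
        Matrix.cons_val_succ, d1, d2, d3, d4, a1, a2, a3, a4]
      push_cast
      rw [h0]
      linarith
    · have a1 : dH p321 p123 = 2 := by decide
      have a2 : dH p321 p213 = 3 := by decide
      have a3 : dH p321 p231 = 2 := by decide
      have a4 : dH p321 p312 = 2 := by decide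
      simp only [Fin.sum_univ_succ, Fin.sum_univ_zero, Matrix.cons_val_zero,
        Matrix.cons_val_succ, d1, d2, d3, d4, a1, a2, a3, a4]
      push_cast
      rw [h0]
      linarith
    · have a1 : dH p231 p123 = 3 := by decide
      have a2 : dH p231 p213 = 2 := by decide
      have a3 : dH p231 p231 = 0 := by decide
      have a4 : dH p231 p312 = 3 := by decide
      simp only [Fin.sum_univ_succ, Fin.sum_univ_zero, Matrix.cons_val_zero,
        Matrix.cons_val_succ, d1, d2, d3, d4, a1, a2, a3, a4]
      push_cast
      rw [h0]
      linarith
    · have a1 : dH p312 p123 = 3 := by decide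
      have a2 : dH p312 p213 = 2 := by decide
      have a3 : dH p312 p231 = 3 := by decide
      have a4 : dH p312 p312 = 0 := by decide
      simp only [Fin.sum_univ_succ, Fin.sum_univ_zero, Matrix.cons_val_zero,
        Matrix.cons_val_succ, d1, d2, d3, d4, a1, a2, a3, a4]
      push_cast
      rw [h0]
      linarith
end

section
/- Consider the ranking profile with m = 3 candidates c1, c2, c3 and n = 7 voters whose rank vectors (σ_v(c1), σ_v(c2), σ_v(c3)) are: σ_1 = σ_2 = (1,2,3), σ_3 = σ_4 = (2,1,3), σ_5 = σ_6 = (2,3,1), σ_7 = (3,1,2). Then: (i) c1 is a Condorcet winner of this profile; (ii) for every real p ≥ 1, the permutation with rank vector (2,1,3) is the unique minimizer of ∑_{v=1}^7 d_C(σ, σ_v)^p over all permutations σ of {1,2,3}, where d_C is the Cayley distance. Since this minimizer ranks c2 (and not the Condorcet winner c1) first, the Cayley-based p-Fréchet mean voting rule does not satisfy the Condorcet-winner property for any p ≥ 1. -/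
open Finset

/-- The number of cycles of a permutation of `Fin m`, fixed points counting as cycles of
length 1. -/
def cycleCount {m : ℕ} (π : Equiv.Perm (Fin m)) : ℕ :=
  π.cycleType.card + (univ.filter fun x => π x = x).card

/-- The Cayley distance `d_C(σ,τ) = m − #cycles(σ ∘ τ⁻¹)`, the minimum number of
transpositions needed to obtain `σ` from `τ`. -/
def dC {m : ℕ} (σ τ : Equiv.Perm (Fin m)) : ℕ := m - cycleCount (σ * τ⁻¹)

/-!
Since `n ≤ n ^ p` for natural `n` and `p ≥ 1`, with equality when `n ≤ 1`, it suffices to treat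
`p = 1`: the transposition π = (2,1,3) is at Cayley distance at most 1 from every voter, and its
total distance 5 is smaller than that of each of the other five rankings (8, 9, 9, 8, 10).
This, and the Condorcet property of `c1`, are finite computations once the Cayley distance on
`S₃` is made decidable: there a permutation other than the identity has exactly one nontrivial
cycle.
-/

open Equiv

theorem rk_injective {m : ℕ} : Function.Injective (@rk m) := by
  intro σ τ h
  ext c
  simpa [rk] using congrFun h c

theorem card_cycleType_le_one {α : Type*} [Fintype α] [DecidableEq α]
    (hα : Fintype.card α ≤ 3) (σ : Perm α) : σ.cycleType.card ≤ 1 := by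
  have hmul : σ.cycleType.card * 2 ≤ σ.cycleType.sum :=
    Multiset.card_nsmul_le_sum fun _ => Perm.two_le_of_mem_cycleType
  have := σ.sum_cycleType ▸ σ.support.card_le_univ
  omega

theorem card_cycleType_eq_ite {α : Type*} [Fintype α] [DecidableEq α]
    (hα : Fintype.card α ≤ 3) (σ : Perm α) : σ.cycleType.card = if σ = 1 then 0 else 1 := by
  split_ifs with h
  · simp [h]
  · have hle := card_cycleType_le_one hα σ
    have hpos := Multiset.card_pos.2 (Perm.cycleType_eq_zero.not.2 h)
    omega

theorem dC_fin_three (σ τ : Perm (Fin 3)) :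
    dC σ τ =
      3 - ((if σ * τ⁻¹ = 1 then 0 else 1) + (univ.filter fun x => (σ * τ⁻¹) x = x).card) := by
  rw [dC, cycleCount, card_cycleType_eq_ite (by simp)]

theorem natCast_le_rpow (n : ℕ) {p : ℝ} (hp : 1 ≤ p) : (n : ℝ) ≤ (n : ℝ) ^ p := by
  rcases n.eq_zero_or_pos with rfl | hn
  · simpa using Real.rpow_nonneg le_rfl p
  · exact Real.self_le_rpow_of_one_le (by exact_mod_cast hn) hp

theorem natCast_rpow_of_le_one {n : ℕ} (hn : n ≤ 1) {p : ℝ} (hp : p ≠ 0) : (n : ℝ) ^ p = n := by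
  interval_cases n <;> simp [hp]

theorem sum_rpow_lt_sum_rpow_of_le_one {ι : Type*} [Fintype ι] {f g : ι → ℕ}
    (hf : ∀ i, f i ≤ 1) (hfg : ∑ i, f i < ∑ i, g i) {p : ℝ} (hp : 1 ≤ p) :
    ∑ i, (f i : ℝ) ^ p < ∑ i, (g i : ℝ) ^ p :=
  calc ∑ i, (f i : ℝ) ^ p = ∑ i, (f i : ℝ) := by
        simp only [natCast_rpow_of_le_one (hf _) (by positivity : p ≠ 0)]
    _ < ∑ i, (g i : ℝ) := by exact_mod_cast hfg
    _ ≤ ∑ i, (g i : ℝ) ^ p := sum_le_sum fun i _ => natCast_le_rpow _ hp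

def IsCondorcetWinner {m n : ℕ} (P : Fin n → Perm (Fin m)) (c₀ : Fin m) : Prop :=
  ∀ c, c ≠ c₀ → (univ.filter fun v => rk (P v) c < rk (P v) c₀).card <
    (univ.filter fun v => rk (P v) c₀ < rk (P v) c).card

def cayleyProfile : Fin 7 → Perm (Fin 3) :=
  ![1, 1, swap 0 1, swap 0 1, finRotate 3, finRotate 3, (finRotate 3)⁻¹]

theorem isCondorcetWinner_cayleyProfile : IsCondorcetWinner cayleyProfile 0 := by
  unfold IsCondorcetWinner; decide

theorem dC_swap_cayleyProfile_le_one (v : Fin 7) : dC (swap 0 1) (cayleyProfile v) ≤ 1 := by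
  rw [dC_fin_three]; revert v; decide

theorem sum_dC_swap_cayleyProfile_lt (σ : Perm (Fin 3)) (hσ : σ ≠ swap 0 1) :
    ∑ v, dC (swap 0 1) (cayleyProfile v) < ∑ v, dC σ (cayleyProfile v) := by
  simp only [dC_fin_three]; revert σ; decide

/-- On the profile σ₁ = σ₂ = (1,2,3), σ₃ = σ₄ = (2,1,3), σ₅ = σ₆ = (2,3,1), σ₇ = (3,1,2):
(i) `c1` is a Condorcet winner; (ii) for every real `p ≥ 1` the permutation π = (2,1,3) is
the unique minimizer of `∑ᵥ d_C(σ, σᵥ)^p`; π ranks `c2` first, so the Cayley-based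
p-Fréchet rule fails the Condorcet-winner property for every `p ≥ 1`. -/
theorem stmt_16 (σ1 σ2 σ3 σ4 σ5 σ6 σ7 π : Equiv.Perm (Fin 3))
    (h1 : rk σ1 = ![1,2,3]) (h2 : rk σ2 = ![1,2,3])
    (h3 : rk σ3 = ![2,1,3]) (h4 : rk σ4 = ![2,1,3])
    (h5 : rk σ5 = ![2,3,1]) (h6 : rk σ6 = ![2,3,1])
    (h7 : rk σ7 = ![3,1,2]) (hπ : rk π = ![2,1,3]) :
    (∀ c : Fin 3, c ≠ 0 →
      (univ.filter fun v =>
          rk (![σ1,σ2,σ3,σ4,σ5,σ6,σ7] v) c < rk (![σ1,σ2,σ3,σ4,σ5,σ6,σ7] v) 0).card <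
        (univ.filter fun v =>
          rk (![σ1,σ2,σ3,σ4,σ5,σ6,σ7] v) 0 < rk (![σ1,σ2,σ3,σ4,σ5,σ6,σ7] v) c).card) ∧
    (∀ p : ℝ, 1 ≤ p → ∀ σ : Equiv.Perm (Fin 3), σ ≠ π →
      ∑ v, (dC π (![σ1,σ2,σ3,σ4,σ5,σ6,σ7] v) : ℝ) ^ p <
        ∑ v, (dC σ (![σ1,σ2,σ3,σ4,σ5,σ6,σ7] v) : ℝ) ^ p) ∧
    rk π 1 = 1 := by
  obtain rfl : σ1 = 1 := rk_injective (h1.trans (by decide))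
  obtain rfl : σ2 = 1 := rk_injective (h2.trans (by decide))
  obtain rfl : σ3 = swap 0 1 := rk_injective (h3.trans (by decide))
  obtain rfl : σ4 = swap 0 1 := rk_injective (h4.trans (by decide))
  obtain rfl : σ5 = finRotate 3 := rk_injective (h5.trans (by decide))
  obtain rfl : σ6 = finRotate 3 := rk_injective (h6.trans (by decide))
  obtain rfl : σ7 = (finRotate 3)⁻¹ := rk_injective (h7.trans (by decide))
  obtain rfl : π = swap 0 1 := rk_injective (hπ.trans (by decide))
  exact ⟨isCondorcetWinner_cayleyProfile, fun p hp σ hσ =>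
    sum_rpow_lt_sum_rpow_of_le_one dC_swap_cayleyProfile_le_one
      (sum_dC_swap_cayleyProfile_lt σ hσ) hp, by decide⟩
end

section
/- Let σ_1, …, σ_n be a ranking profile of permutations of {1, …, m}. Fix a voter v0 and a candidate c* with α := σ_{v0}(c*) ≥ 2, and let c0 be the candidate with σ_{v0}(c0) = α − 1. Define the modified profile σ̃_1, …, σ̃_n by σ̃_v = σ_v for v ≠ v0 and σ̃_{v0} equal to σ_{v0} except that σ̃_{v0}(c*) = α − 1 and σ̃_{v0}(c0) = α (voter v0 moves c* up by one position). Suppose σ* minimizes ∑_{v=1}^n d_1(σ, σ_v) over all permutations of {1, …, m} and σ*(c*) = 1. Then for every permutation σ that does NOT minimize ∑_{v=1}^n d_1(σ, σ_v), one has ∑_{v=1}^n d_1(σ*, σ̃_v) ≤ ∑_{v=1}^n d_1(σ, σ̃_v). (Key step showing the Spearman-footrule consensus-ranking voting rule satisfies Monotonicity: a deepest ranking placing the winner first remains at least as deep as any previously non-optimal ranking after a change in the winner's favor.) -/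
open Finset

lemma d1_even {m : ℕ} (σ τ : Equiv.Perm (Fin m)) : 2 ∣ d1 σ τ := by
  have hneg : ∀ a : ZMod 2, -a = a := by decide
  have h0 : ∑ c, ((rk σ c : ℤ) - rk τ c) = 0 := by
    rw [Finset.sum_sub_distrib]
    have h1 := Equiv.sum_comp σ (fun c : Fin m => ((c : ℤ) + 1))
    have h2 := Equiv.sum_comp τ (fun c : Fin m => ((c : ℤ) + 1))
    simp only [rk]
    push_cast
    rw [h1, h2, sub_self]
  have hz : ((d1 σ τ : ℕ) : ZMod 2) = 0 := by
    unfold d1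
    push_cast
    have : ∀ c : Fin m, (((((rk σ c : ℤ) - rk τ c).natAbs : ℕ)) : ZMod 2)
        = (((rk σ c : ℤ) - rk τ c : ℤ) : ZMod 2) := by
      intro c
      rcases Int.natAbs_eq ((rk σ c : ℤ) - rk τ c) with h | h
      · conv_rhs => rw [h]
        rw [Int.cast_natCast]
      · conv_rhs => rw [h]
        rw [Int.cast_neg, Int.cast_natCast, hneg]
    calc (∑ c, ((((rk σ c : ℤ) - rk τ c).natAbs : ℕ) : ZMod 2))
        = ∑ c, (((rk σ c : ℤ) - rk τ c : ℤ) : ZMod 2) := Finset.sum_congr rfl (fun c _ => this c)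
      _ = ((∑ c, ((rk σ c : ℤ) - rk τ c) : ℤ) : ZMod 2) := by push_cast; ring
      _ = 0 := by rw [h0]; simp
  exact (ZMod.natCast_eq_zero_iff _ _).mp hz

lemma d1_sub {m : ℕ} (σ τ τ' : Equiv.Perm (Fin m)) (a b : Fin m) (hab : a ≠ b)
    (h : ∀ c, c ≠ a → c ≠ b → τ' c = τ c) :
    (d1 σ τ' : ℤ) - d1 σ τ =
      (|(rk σ a : ℤ) - rk τ' a| - |(rk σ a : ℤ) - rk τ a|)
    + (|(rk σ b : ℤ) - rk τ' b| - |(rk σ b : ℤ) - rk τ b|) := by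
  unfold d1
  push_cast
  have hb : b ∈ (univ : Finset (Fin m)).erase a :=
    Finset.mem_erase.2 ⟨hab.symm, Finset.mem_univ b⟩
  rw [← Finset.add_sum_erase _ (fun c => |(rk σ c : ℤ) - rk τ' c|) (Finset.mem_univ a),
      ← Finset.add_sum_erase _ (fun c => |(rk σ c : ℤ) - rk τ' c|) hb,
      ← Finset.add_sum_erase _ (fun c => |(rk σ c : ℤ) - rk τ c|) (Finset.mem_univ a),
      ← Finset.add_sum_erase _ (fun c => |(rk σ c : ℤ) - rk τ c|) hb]
  have hrest : ∑ c ∈ (((univ : Finset (Fin m)).erase a).erase b), |(rk σ c : ℤ) - rk τ' c|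
      = ∑ c ∈ (((univ : Finset (Fin m)).erase a).erase b), |(rk σ c : ℤ) - rk τ c| := by
    refine Finset.sum_congr rfl (fun c hc => ?_)
    have hcb : c ≠ b := (Finset.mem_erase.1 hc).1
    have hca : c ≠ a := (Finset.mem_erase.1 (Finset.mem_erase.1 hc).2).1
    rw [show rk τ' c = rk τ c by unfold rk; rw [h c hca hcb]]
  rw [hrest]; ring


/-- Monotonicity key step for footrule consensus ranking: if voter `v0` swaps the adjacent
ranks of the winner `c*` (ranked `α ≥ 2`) and of `c0` (ranked `α − 1`) in favour of `c*`,
then a footrule consensus ranking `σ*` that ranks `c*` first remains at least as deep, for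
the modified profile, as any permutation that was not a minimizer for the original
profile. -/
theorem stmt_18 (n m : ℕ) (σs tσs : Fin n → Equiv.Perm (Fin m)) (v0 : Fin n)
    (cstar c0 : Fin m) (α : ℕ) (hα2 : 2 ≤ α)
    (hα : rk (σs v0) cstar = α) (hc0 : rk (σs v0) c0 = α - 1)
    (ht1 : ∀ v, v ≠ v0 → tσs v = σs v)
    (ht2 : rk (tσs v0) cstar = α - 1) (ht3 : rk (tσs v0) c0 = α)
    (ht4 : ∀ c : Fin m, c ≠ cstar → c ≠ c0 → tσs v0 c = σs v0 c)
    (σstar : Equiv.Perm (Fin m))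
    (hmin : ∀ σ : Equiv.Perm (Fin m), ∑ v, d1 σstar (σs v) ≤ ∑ v, d1 σ (σs v))
    (hfirst : rk σstar cstar = 1) :
    ∀ σ : Equiv.Perm (Fin m),
      ¬(∀ τ : Equiv.Perm (Fin m), ∑ v, d1 σ (σs v) ≤ ∑ v, d1 τ (σs v)) →
      ∑ v, d1 σstar (tσs v) ≤ ∑ v, d1 σ (tσs v) := by
  intro σ hσ
  -- basic numeric facts
  have hA1 : ((α - 1 : ℕ) : ℤ) = (α : ℤ) - 1 := by omega
  have hne : cstar ≠ c0 := by
    intro h; rw [h, hc0] at hα; omega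
  -- casts of ranks
  have hrc : ((rk (σs v0) cstar : ℕ) : ℤ) = (α : ℤ) := by rw [hα]
  have hrc' : ((rk (tσs v0) cstar : ℕ) : ℤ) = (α : ℤ) - 1 := by rw [ht2, hA1]
  have hr0 : ((rk (σs v0) c0 : ℕ) : ℤ) = (α : ℤ) - 1 := by rw [hc0, hA1]
  have hr0' : ((rk (tσs v0) c0 : ℕ) : ℤ) = (α : ℤ) := by rw [ht3]
  -- per-voter difference identity, specialized
  have hdiff : ∀ ρ : Equiv.Perm (Fin m),
      (d1 ρ (tσs v0) : ℤ) - d1 ρ (σs v0) =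
        (|(rk ρ cstar : ℤ) - ((α : ℤ) - 1)| - |(rk ρ cstar : ℤ) - (α : ℤ)|)
      + (|(rk ρ c0 : ℤ) - (α : ℤ)| - |(rk ρ c0 : ℤ) - ((α : ℤ) - 1)|) := by
    intro ρ
    have := d1_sub ρ (σs v0) (tσs v0) cstar c0 hne ht4
    rw [hrc, hrc', hr0, hr0'] at this
    exact this
  -- bound for general σ : difference ≥ -2
  have habs : ∀ x p q : ℤ, |x - p| - |x - q| ≤ |q - p| := by
    intro x p q
    have := abs_sub_abs_le_abs_sub (x - p) (x - q)
    have h2 : (x - p) - (x - q) = q - p := by ring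
    rwa [h2] at this
  have hgen : (d1 σ (tσs v0) : ℤ) - d1 σ (σs v0) ≥ -2 := by
    rw [hdiff σ]
    have h1 := habs (rk σ cstar : ℤ) ((α : ℤ)) ((α : ℤ) - 1)
    have h2 := habs (rk σ c0 : ℤ) ((α : ℤ) - 1) ((α : ℤ))
    have e1 : |((α : ℤ) - 1) - (α : ℤ)| = 1 := by rw [show ((α:ℤ)-1) - α = -1 by ring]; simp
    have e2 : |(α : ℤ) - ((α : ℤ) - 1)| = 1 := by rw [show (α:ℤ) - ((α:ℤ)-1) = 1 by ring]; simp
    rw [e1] at h1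
    rw [e2] at h2
    linarith
  -- bound for σstar : difference ≤ 0
  have hstar : (d1 σstar (tσs v0) : ℤ) - d1 σstar (σs v0) ≤ 0 := by
    rw [hdiff σstar]
    have hx : ((rk σstar cstar : ℕ) : ℤ) = 1 := by rw [hfirst]; norm_num
    rw [hx]
    have hA : (2 : ℤ) ≤ (α : ℤ) := by exact_mod_cast hα2
    have e1 : |(1 : ℤ) - ((α : ℤ) - 1)| = (α : ℤ) - 2 := by
      rw [abs_of_nonpos (by linarith)]; ring
    have e2 : |(1 : ℤ) - (α : ℤ)| = (α : ℤ) - 1 := by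
      rw [abs_of_nonpos (by linarith)]; ring
    rw [e1, e2]
    have h2 := habs (rk σstar c0 : ℤ) ((α : ℤ)) ((α : ℤ) - 1)
    have e3 : |((α : ℤ) - 1) - (α : ℤ)| = 1 := by rw [show ((α:ℤ)-1) - α = -1 by ring]; simp
    rw [e3] at h2
    linarith
  -- voter sum shift
  have hshift : ∀ ρ : Equiv.Perm (Fin m),
      ((∑ v, d1 ρ (tσs v) : ℕ) : ℤ) - (∑ v, d1 ρ (σs v) : ℕ)
        = (d1 ρ (tσs v0) : ℤ) - d1 ρ (σs v0) := by
    intro ρ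
    push_cast
    rw [← Finset.add_sum_erase _ (fun v => (d1 ρ (tσs v) : ℤ)) (Finset.mem_univ v0),
        ← Finset.add_sum_erase _ (fun v => (d1 ρ (σs v) : ℤ)) (Finset.mem_univ v0)]
    have hrest : ∑ v ∈ (univ : Finset (Fin n)).erase v0, (d1 ρ (tσs v) : ℤ)
        = ∑ v ∈ (univ : Finset (Fin n)).erase v0, (d1 ρ (σs v) : ℤ) := by
      refine Finset.sum_congr rfl (fun v hv => ?_)
      rw [ht1 v (Finset.mem_erase.1 hv).1]
    rw [hrest]; ring
  -- strict inequality + parity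
  push_neg at hσ
  obtain ⟨τ, hτ⟩ := hσ
  have hlt : ∑ v, d1 σstar (σs v) < ∑ v, d1 σ (σs v) := lt_of_le_of_lt (hmin τ) hτ
  have hev1 : 2 ∣ ∑ v, d1 σstar (σs v) := Finset.dvd_sum (fun v _ => d1_even _ _)
  have hev2 : 2 ∣ ∑ v, d1 σ (σs v) := Finset.dvd_sum (fun v _ => d1_even _ _)
  have hgap : ∑ v, d1 σstar (σs v) + 2 ≤ ∑ v, d1 σ (σs v) := by omega
  have hgapZ : ((∑ v, d1 σstar (σs v) : ℕ) : ℤ) + 2 ≤ ((∑ v, d1 σ (σs v) : ℕ) : ℤ) := by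
    exact_mod_cast hgap
  have h1 := hshift σstar
  have h2 := hshift σ
  have : ((∑ v, d1 σstar (tσs v) : ℕ) : ℤ) ≤ ((∑ v, d1 σ (tσs v) : ℕ) : ℤ) := by linarith
  exact_mod_cast this
end

section
/- Consider m = 5 candidates A, B, C, D, E and n = 5 voters with rank vectors (σ(A), σ(B), σ(C), σ(D), σ(E)): σ_1 = σ_2 = a = (1,2,3,4,5), σ_3 = σ_4 = b = (3,4,2,1,5), σ_5 = c = (4,5,3,2,1). Let the modified profile be σ̃_v = σ_v for v ≤ 4 and σ̃_5 = (3,5,4,2,1) (voter 5 swaps the ranks of A and C, improving the rank of A from 4 to 3). Then: (i) a is the unique minimizer of ∑_{v=1}^5 d_H(σ, σ_v) over all permutations σ of {1, …, 5}; (ii) ∑_{v=1}^5 d_H(b, σ̃_v) < ∑_{v=1}^5 d_H(a, σ̃_v), so a is no longer a consensus ranking for the modified profile even though the modification was in favor of the previous winner A. Hence the Hamming-based consensus-ranking voting rule does not satisfy Monotonicity. -/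
open Finset

def p0 : Equiv.Perm (Fin 5) := Equiv.refl _
def pb : Equiv.Perm (Fin 5) := ⟨![2,3,1,0,4], ![3,2,0,1,4], by decide, by decide⟩
def pc : Equiv.Perm (Fin 5) := ⟨![3,4,2,1,0], ![4,3,2,0,1], by decide, by decide⟩
def pt : Equiv.Perm (Fin 5) := ⟨![2,4,3,1,0], ![4,3,0,2,1], by decide, by decide⟩

lemma eq_of_rk {σ τ : Equiv.Perm (Fin 5)} (h : ∀ i, rk σ i = rk τ i) : σ = τ := by
  ext i
  have h2 := h i
  simp only [rk] at h2
  have : (σ i : ℕ) = (τ i : ℕ) := by omega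
  exact this

set_option maxRecDepth 20000 in
/-- Counterexample to Monotonicity for the Hamming consensus ranking: for the profile
σ₁ = σ₂ = a = (1,2,3,4,5), σ₃ = σ₄ = b = (3,4,2,1,5), σ₅ = c = (4,5,3,2,1),
(i) `a` is the unique minimizer of `∑ᵥ d_H(σ, σᵥ)`; (ii) after voter 5 swaps the ranks of
A and C in favour of the winner A (σ̃₅ = (3,5,4,2,1)), `b` is strictly deeper than `a`,
so `a` is no longer a consensus ranking. -/
theorem stmt_19 (a b c t5 : Equiv.Perm (Fin 5))
    (ha : rk a = ![1,2,3,4,5]) (hb : rk b = ![3,4,2,1,5]) (hc : rk c = ![4,5,3,2,1])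
    (ht : rk t5 = ![3,5,4,2,1]) :
    (∀ σ : Equiv.Perm (Fin 5), σ ≠ a →
      ∑ v, dH a (![a,a,b,b,c] v) < ∑ v, dH σ (![a,a,b,b,c] v)) ∧
    (∑ v, dH b (![a,a,b,b,t5] v) < ∑ v, dH a (![a,a,b,b,t5] v)) := by
  have ha' : a = p0 := eq_of_rk (fun i => by rw [ha]; revert i; decide)
  have hb' : b = pb := eq_of_rk (fun i => by rw [hb]; revert i; decide)
  have hc' : c = pc := eq_of_rk (fun i => by rw [hc]; revert i; decide)
  have ht' : t5 = pt := eq_of_rk (fun i => by rw [ht]; revert i; decide)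
  subst ha' hb' hc' ht'
  constructor
  · decide
  · decide
end
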